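/- If the tent map T is long-branched (i.e. inf_n |D_n| > 0), then every proper subcontinuum of the core inverse limit space X′ is a point or an arc. -/

import Mathlib

open Set Filter Topology

/-- The inverse limit `lim←(K, T)`, as the space of backward orbits. -/
abbrev InvLim (T : ℝ → ℝ) (K : Set ℝ) :=
  {x : ℕ → ℝ // (∀ n, x n ∈ K) ∧ ∀ n, T (x (n + 1)) = x n}

/-- A subset of a topological space is an arc if it is the image of `[0,1]` under a
topological embedding. -/
def IsArc {Z : Type*} [TopologicalSpace Z] (A : Set Z) : Prop :=
  ∃ f : Set.Icc (0:ℝ) 1 → Z, Topology.IsEmbedding f ∧ Set.range f = A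

/-!
Write `Pᵢ = πᵢ(H)`: these are intervals in the core with `T(Pᵢ₊₁) = Pᵢ`.

If `c ∉ Pᵢ` for all large `i`, then `T` is injective on those `Pᵢ`, so a single projection
embeds `H` into an interval, and `H` is a point or an arc.

Otherwise take consecutive indices `i < j` with `c ∈ Pᵢ` and `c ∈ Pⱼ`. Then `Pⱼ` contains
a point `x ≠ c` with `T^(j-i) x = c`. The branch of `T^(j-i+1)` ending at `c` is mapped onto the
level `D_(j-i+1)` of the Hofbauer tower, which has length at least `δ`, and it contains no such
point; hence `|x - c| ≥ δ / s^(j-i+1)`. One fold and `j - i - 1` expansions by the factor `s`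
carry this to `|Pᵢ| ≥ δ / (2s)`. So `|Pᵢ|` is bounded below infinitely often, and since the
tent map is locally eventually onto the core, every `Pᵢ` is the whole core, i.e. `H = X′`.
-/

theorem eq_singleton_or_isArc_of_injOn {Z : Type*} [TopologicalSpace Z] [T2Space Z]
    {H : Set Z} (hcomp : IsCompact H) (hconn : IsConnected H) {φ : Z → ℝ} (hφ : Continuous φ)
    (hinj : InjOn φ H) : (∃ a, H = {a}) ∨ IsArc H := by
  have himg := eq_Icc_of_connected_compact (hconn.image φ hφ.continuousOn) (hcomp.image hφ)
  rcases le_or_gt (sSup (φ '' H)) (sInf (φ '' H)) with hle | hlt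
  · left
    obtain ⟨z, hz⟩ := hconn.nonempty
    refine ⟨z, Set.Subsingleton.eq_singleton_of_mem (fun x hx y hy => hinj hx hy ?_) hz⟩
    have hx' := himg ▸ mem_image_of_mem φ hx
    have hy' := himg ▸ mem_image_of_mem φ hy
    exact le_antisymm (by linarith [hx'.2, hy'.1]) (by linarith [hx'.1, hy'.2])
  · right
    have := isCompact_iff_compactSpace.mp hcomp
    have hemb : IsEmbedding (H.domRestrict φ) :=
      ((hφ.comp continuous_subtype_val).isClosedEmbedding
        (injOn_iff_injective.1 hinj)).isEmbedding
    let e : H ≃ₜ Icc (sInf (φ '' H)) (sSup (φ '' H)) :=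
      hemb.toHomeomorph.trans (Homeomorph.setCongr (by rw [range_domRestrict, ← himg]))
    let g : Icc (0:ℝ) 1 ≃ₜ H := (iccHomeoI _ _ hlt).symm.trans e.symm
    exact ⟨Subtype.val ∘ g, IsEmbedding.subtypeVal.comp g.isEmbedding,
      by rw [range_comp, g.range_coe, image_univ, Subtype.range_coe]⟩

theorem mul_diam_le_diam_image {α β : Type*} [PseudoMetricSpace α] [PseudoMetricSpace β]
    {f : α → β} {A : Set α} {k : ℝ} (hk : 0 < k) (hB : Bornology.IsBounded (f '' A))
    (hf : ∀ x ∈ A, ∀ y ∈ A, k * dist x y ≤ dist (f x) (f y)) :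
    k * Metric.diam A ≤ Metric.diam (f '' A) := by
  rw [← le_div_iff₀' hk]
  refine Metric.diam_le_of_forall_dist_le (div_nonneg Metric.diam_nonneg hk.le) fun x hx y hy => ?_
  rw [le_div_iff₀' hk]
  exact (hf x hx y hy).trans
    (Metric.dist_le_diam_of_mem hB (mem_image_of_mem f hx) (mem_image_of_mem f hy))

theorem Real.diam_uIcc (a b : ℝ) : Metric.diam (uIcc a b) = dist a b := by
  rw [← Icc_min_max, Real.diam_Icc min_le_max, max_sub_min_eq_abs', Real.dist_eq]

theorem IsConnected.exists_eq_uIcc {A : Set ℝ} (hconn : IsConnected A) (hcomp : IsCompact A) :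
    ∃ a b, A = uIcc a b :=
  ⟨sInf A, sSup A, by
    rw [uIcc_of_le (Real.sInf_le_sSup A hcomp.bddBelow hcomp.bddAbove)]
    exact eq_Icc_of_connected_compact hconn hcomp⟩

namespace InvLim

variable {T : ℝ → ℝ} {K : Set ℝ}

def proj (i : ℕ) (z : InvLim T K) : ℝ := z.1 i

theorem continuous_proj (i : ℕ) : Continuous (proj i : InvLim T K → ℝ) :=
  (continuous_apply i).comp continuous_subtype_val

theorem proj_mem (z : InvLim T K) (i : ℕ) : proj i z ∈ K := z.2.1 i

theorem map_proj_succ (z : InvLim T K) (i : ℕ) : T (proj (i + 1) z) = proj i z := z.2.2 i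

theorem proj_eq_iterate (z : InvLim T K) (i k : ℕ) : proj i z = T^[k] (proj (i + k) z) := by
  induction k with
  | zero => rfl
  | succ k ih => rw [ih, ← map_proj_succ z (i + k), ← Function.iterate_succ_apply]; rfl

theorem image_proj_eq_iterate_image (H : Set (InvLim T K)) (i k : ℕ) :
    proj i '' H = T^[k] '' (proj (i + k) '' H) := by
  rw [image_image]
  exact image_congr fun z _ => proj_eq_iterate z i k

theorem proj_eq_of_le {z w : InvLim T K} {i n : ℕ} (hin : i ≤ n) (h : proj n z = proj n w) :
    proj i z = proj i w := by
  obtain ⟨k, rfl⟩ := Nat.exists_eq_add_of_le hin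
  rw [proj_eq_iterate z i k, proj_eq_iterate w i k, h]

theorem mem_of_forall_proj_mem {H : Set (InvLim T K)} (hH : IsClosed H) {z : InvLim T K}
    (hz : ∀ n, proj n z ∈ proj n '' H) : z ∈ H := by
  choose u hu hproj using hz
  refine hH.mem_of_tendsto (b := atTop) (f := u) ?_ (Eventually.of_forall hu)
  rw [tendsto_subtype_rng, tendsto_pi_nhds]
  intro i
  refine tendsto_const_nhds.congr' (eventually_atTop.2 ⟨i, fun n hn => ?_⟩)
  exact (proj_eq_of_le hn (hproj n)).symm

theorem injOn_proj {H : Set (InvLim T K)} {N : ℕ} (hT : ∀ i, N < i → InjOn T (proj i '' H)) :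
    InjOn (proj N) H := by
  intro z hz w hw h
  have hge : ∀ i, N ≤ i → proj i z = proj i w := by
    intro i hi
    induction i, hi using Nat.le_induction with
    | base => exact h
    | succ i hi ih =>
      refine hT (i + 1) (by omega) (mem_image_of_mem _ hz) (mem_image_of_mem _ hw) ?_
      rw [map_proj_succ z i, map_proj_succ w i]
      exact ih
  exact Subtype.ext (funext fun i => proj_eq_of_le (le_max_left i N) (hge _ (le_max_right i N)))

end InvLim

noncomputable def tent (s x : ℝ) : ℝ := min (s * x) (s * (1 - x))

def OnOneSide (A : Set ℝ) : Prop := A ⊆ Iic (1/2) ∨ A ⊆ Ici (1/2)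

theorem OnOneSide.mono {A B : Set ℝ} (h : OnOneSide B) (hAB : A ⊆ B) : OnOneSide A :=
  h.imp hAB.trans hAB.trans

theorem IsPreconnected.onOneSide {A : Set ℝ} (hA : IsPreconnected A) (hc : (1/2 : ℝ) ∉ A) :
    OnOneSide A := by
  by_contra h
  obtain ⟨⟨x, hxA, hx⟩, ⟨y, hyA, hy⟩⟩ := not_or.1 h |>.imp not_subset.1 not_subset.1
  simp only [mem_Iic, mem_Ici, not_le] at hx hy
  exact hc (hA.Icc_subset hyA hxA ⟨hy.le, hx.le⟩)

theorem onOneSide_uIcc_half (b : ℝ) : OnOneSide (uIcc (1/2) b) := by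
  rcases le_total b (1/2) with hb | hb
  · exact Or.inl fun x hx => by rw [uIcc_of_ge hb] at hx; exact hx.2
  · exact Or.inr fun x hx => by rw [uIcc_of_le hb] at hx; exact hx.1

section Tent

variable {s : ℝ}

theorem tent_of_le_half (hs : 0 ≤ s) {x : ℝ} (hx : x ≤ 1/2) : tent s x = s * x :=
  min_eq_left (by nlinarith)

theorem tent_of_half_le (hs : 0 ≤ s) {x : ℝ} (hx : 1/2 ≤ x) : tent s x = s * (1 - x) :=
  min_eq_right (by nlinarith)

theorem tent_half (s : ℝ) : tent s (1/2) = s/2 := by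
  rw [tent, show (1:ℝ) - 1/2 = 1/2 by norm_num, min_self]; ring

theorem tent_le_half_slope (s x : ℝ) : tent s x ≤ s/2 := by
  have := min_le_left (s * x) (s * (1 - x))
  have := min_le_right (s * x) (s * (1 - x))
  rw [tent]
  linarith

theorem tent_one_sub (s x : ℝ) : tent s (1 - x) = tent s x := by
  rw [tent, tent, min_comm, sub_sub_cancel]

theorem iterate_tent_one_sub (s x : ℝ) {n : ℕ} (hn : n ≠ 0) :
    (tent s)^[n] (1 - x) = (tent s)^[n] x := by
  obtain ⟨k, rfl⟩ := Nat.exists_eq_succ_of_ne_zero hn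
  rw [Function.iterate_succ_apply, Function.iterate_succ_apply, tent_one_sub]

theorem dist_tent_half (hs : 0 ≤ s) (x : ℝ) : dist (tent s x) (s/2) = s * dist x (1/2) := by
  rw [Real.dist_eq, Real.dist_eq]
  rcases le_total x (1/2) with hx | hx
  · rw [tent_of_le_half hs hx, abs_of_nonpos (by nlinarith), abs_of_nonpos (by linarith)]; ring
  · rw [tent_of_half_le hs hx, abs_of_nonpos (by nlinarith), abs_of_nonneg (by linarith)]; ring

theorem dist_tent_of_onOneSide (hs : 0 ≤ s) {A : Set ℝ} (hA : OnOneSide A) {x y : ℝ}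
    (hx : x ∈ A) (hy : y ∈ A) : dist (tent s x) (tent s y) = s * dist x y := by
  rw [Real.dist_eq, Real.dist_eq]
  rcases hA with hA | hA
  · rw [tent_of_le_half hs (hA hx), tent_of_le_half hs (hA hy), ← mul_sub, abs_mul,
      abs_of_nonneg hs]
  · rw [tent_of_half_le hs (hA hx), tent_of_half_le hs (hA hy), ← mul_sub, abs_mul,
      abs_of_nonneg hs, sub_sub_sub_cancel_left, abs_sub_comm]

theorem OnOneSide.injOn_tent (hs : 0 < s) {A : Set ℝ} (h : OnOneSide A) : InjOn (tent s) A :=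
  fun x hx y hy hxy => by
    simpa [hs.ne'] using (dist_tent_of_onOneSide hs.le h hx hy).symm.trans (dist_eq_zero.2 hxy)

/-- Each `x ∈ A` is sent to distance `s * |x - c|` from `T c = s/2`. -/
theorem mul_diam_le_diam_image_tent (hs : 0 < s) {A : Set ℝ} (hc : (1/2 : ℝ) ∈ A)
    (hB : Bornology.IsBounded (tent s '' A)) :
    s / 2 * Metric.diam A ≤ Metric.diam (tent s '' A) := by
  have hfar : ∀ x ∈ A, s * dist x (1/2) ≤ Metric.diam (tent s '' A) := fun x hx => by
    rw [← dist_tent_half hs.le, ← tent_half]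
    exact Metric.dist_le_diam_of_mem hB (mem_image_of_mem _ hx) (mem_image_of_mem _ hc)
  rw [← le_div_iff₀' (by positivity)]
  refine Metric.diam_le_of_forall_dist_le (by positivity) fun x hx y hy => ?_
  rw [le_div_iff₀' (by positivity)]
  nlinarith [hfar x hx, hfar y hy, mul_le_mul_of_nonneg_left (dist_triangle_right x y (1/2)) hs.le]

theorem image_tent_uIcc (hs : 0 ≤ s) {a b : ℝ} (h : OnOneSide (uIcc a b)) :
    tent s '' uIcc a b = uIcc (tent s a) (tent s b) := by
  rcases h with h | h
  · rw [image_congr fun x hx => tent_of_le_half hs (h hx), image_const_mul_uIcc,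
      tent_of_le_half hs (h left_mem_uIcc), tent_of_le_half hs (h right_mem_uIcc)]
  · have : tent s '' uIcc a b = (fun x => s - x) '' ((fun x => s * x) '' uIcc a b) := by
      rw [image_image]
      exact image_congr fun x hx => by rw [tent_of_half_le hs (h hx)]; ring
    rw [this, image_const_mul_uIcc, image_const_sub_uIcc,
      tent_of_half_le hs (h left_mem_uIcc), tent_of_half_le hs (h right_mem_uIcc), mul_one_sub,
      mul_one_sub]

theorem dist_iterate_tent (hs : 0 ≤ s) {A : Set ℝ} {m : ℕ}
    (hA : ∀ j < m, OnOneSide ((tent s)^[j] '' A)) {x y : ℝ} (hx : x ∈ A) (hy : y ∈ A) :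
    dist ((tent s)^[m] x) ((tent s)^[m] y) = s ^ m * dist x y := by
  induction m with
  | zero => simp
  | succ m ih =>
    rw [Function.iterate_succ_apply', Function.iterate_succ_apply',
      dist_tent_of_onOneSide hs (hA m m.lt_succ_self) (mem_image_of_mem _ hx)
        (mem_image_of_mem _ hy),
      ih fun j hj => hA j (hj.trans m.lt_succ_self), pow_succ, mul_comm _ s, mul_assoc]

theorem image_iterate_tent_uIcc (hs : 0 ≤ s) {a b : ℝ} {m : ℕ}
    (h : ∀ j < m, OnOneSide ((tent s)^[j] '' uIcc a b)) :
    (tent s)^[m] '' uIcc a b = uIcc ((tent s)^[m] a) ((tent s)^[m] b) := by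
  induction m with
  | zero => simp
  | succ m ih =>
    have ih := ih fun j hj => h j (hj.trans m.lt_succ_self)
    have hm := h m m.lt_succ_self
    rw [ih] at hm
    rw [Function.iterate_succ', image_comp, ih, image_tent_uIcc hs hm, Function.comp_apply,
      Function.comp_apply]

end Tent

section Core

variable {s : ℝ}

/-- The core `[c₂, c₁]`, with `c₁ = s/2` and `c₂ = s - s²/2`. -/
def core (s : ℝ) : Set ℝ := Icc (s - s^2/2) (s/2)

theorem isBounded_core (s : ℝ) : Bornology.IsBounded (core s) := Metric.isBounded_Icc _ _

theorem tent_half_slope (hs : 1 ≤ s) : tent s (s/2) = s - s^2/2 := by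
  rw [tent_of_half_le (by linarith) (by linarith)]; ring

theorem mapsTo_tent_core (hs1 : 1 ≤ s) (hs2 : s ≤ 2) : MapsTo (tent s) (core s) (core s) := by
  intro x hx
  refine ⟨?_, tent_le_half_slope s x⟩
  rcases le_total x (1/2) with h | h
  · rw [tent_of_le_half (by linarith) h]; nlinarith [hx.1]
  · rw [tent_of_half_le (by linarith) h]; nlinarith [hx.2]

theorem image_tent_Icc_half (hs : 1 ≤ s) : tent s '' Icc (1/2) (s/2) = core s := by
  rw [← uIcc_of_le (by linarith), image_tent_uIcc (by linarith) (onOneSide_uIcc_half _),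
    tent_half, tent_half_slope hs, uIcc_of_ge (by nlinarith), core]

theorem image_iterate_tent_core (hs1 : 1 ≤ s) (hs2 : s ≤ 2) (k : ℕ) :
    (tent s)^[k] '' core s = core s := by
  have h : tent s '' core s = core s :=
    (mapsTo_tent_core hs1 hs2).image_subset.antisymm <|
      (image_tent_Icc_half hs1).symm.subset.trans <|
        image_mono <| Icc_subset_Icc (by nlinarith) le_rfl
  induction k with
  | zero => simp
  | succ k ih => rw [Function.iterate_succ', image_comp, ih, h]

theorem dist_le_one_of_uIcc_subset_core (hs0 : 0 ≤ s) (hs2 : s ≤ 2) {a b : ℝ}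
    (h : uIcc a b ⊆ core s) : dist a b ≤ 1 := by
  have ha := h left_mem_uIcc
  have hb := h right_mem_uIcc
  rw [Real.dist_eq, abs_le]
  constructor <;> nlinarith [ha.1, ha.2, hb.1, hb.2]

/-- An interval around `c` is folded onto its longer half, so it may take two steps to gain the
factor `s · s/2`. -/
theorem exists_iterate_image_expand (hs1 : 1 ≤ s) (hs2 : s ≤ 2) (a b : ℝ) :
    Icc (1/2) (s/2) ⊆ tent s '' uIcc a b ∨
      ∃ k ≤ 2, ∃ x y, s^2/2 * dist a b ≤ dist x y ∧
        uIcc x y ⊆ (tent s)^[k] '' uIcc a b := by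
  have hs0 : 0 ≤ s := by linarith
  by_cases hc : (1/2 : ℝ) ∈ uIcc a b
  · obtain ⟨e, he, hfar⟩ : ∃ e ∈ uIcc a b, dist a b / 2 ≤ dist e (1/2) := by
      have := dist_triangle_right a b (1/2)
      rcases le_total (dist a (1/2)) (dist b (1/2)) with h | h
      · exact ⟨b, right_mem_uIcc, by linarith⟩
      · exact ⟨a, left_mem_uIcc, by linarith⟩
    have hTe : uIcc (tent s e) (s/2) ⊆ tent s '' uIcc a b := by
      rw [← tent_half, ← image_tent_uIcc hs0 (by rw [uIcc_comm]; exact onOneSide_uIcc_half e)]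
      exact image_mono (uIcc_subset_uIcc he hc)
    rw [uIcc_of_le (tent_le_half_slope s e)] at hTe
    rcases le_total (tent s e) (1/2) with hle | hlt
    · exact Or.inl ((Icc_subset_Icc_left hle).trans hTe)
    · have hside : OnOneSide (uIcc (tent s e) (s/2)) :=
        Or.inr fun x hx => hlt.trans <| by
          rw [uIcc_of_le (tent_le_half_slope s e)] at hx; exact hx.1
      refine Or.inr ⟨2, le_rfl, _, _, ?_, (image_tent_uIcc hs0 hside).symm.subset.trans ?_⟩
      · rw [dist_tent_of_onOneSide hs0 hside left_mem_uIcc right_mem_uIcc, dist_tent_half hs0]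
        nlinarith [mul_le_mul_of_nonneg_left hfar (sq_nonneg s)]
      · rw [Function.iterate_succ, image_comp, Function.iterate_one,
          uIcc_of_le (tent_le_half_slope s e)]
        exact image_mono hTe
  · have hside := isPreconnected_uIcc.onOneSide hc
    refine Or.inr ⟨1, by norm_num, _, _, ?_, (image_tent_uIcc hs0 hside).symm.subset⟩
    rw [dist_tent_of_onOneSide hs0 hside left_mem_uIcc right_mem_uIcc]
    nlinarith [mul_nonneg (mul_nonneg hs0 (sub_nonneg.2 hs2)) (dist_nonneg (x := a) (y := b))]

theorem exists_iterate_image_superset_Icc_half (hs1 : 1 ≤ s) (hs2 : s ≤ 2) (n : ℕ) {a b : ℝ}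
    (hsub : uIcc a b ⊆ core s) (hlen : 1 < (s^2/2)^n * dist a b) :
    ∃ m ≤ 2 * n, Icc (1/2) (s/2) ⊆ (tent s)^[m] '' uIcc a b := by
  induction n generalizing a b with
  | zero =>
    rw [pow_zero, one_mul] at hlen
    exact absurd (dist_le_one_of_uIcc_subset_core (by linarith) hs2 hsub) hlen.not_ge
  | succ n ih =>
    rcases exists_iterate_image_expand hs1 hs2 a b with h | ⟨k, hk, x, y, hxy, hsub'⟩
    · exact ⟨1, by omega, h⟩
    · have hcore : uIcc x y ⊆ core s :=
        hsub'.trans ((image_mono hsub).trans (image_iterate_tent_core hs1 hs2 k).subset)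
      obtain ⟨m, hm, hcover⟩ := ih hcore <| by
        calc 1 < (s^2/2)^n * (s^2/2 * dist a b) := by rwa [← mul_assoc, ← pow_succ]
          _ ≤ (s^2/2)^n * dist x y := by gcongr
      refine ⟨m + k, by omega, ?_⟩
      rw [Function.iterate_add, image_comp]
      exact hcover.trans (image_mono hsub')

/-- Locally eventually onto, uniformly in the length of the interval. -/
theorem exists_forall_iterate_image_eq_core (hs1 : Real.sqrt 2 < s) (hs2 : s ≤ 2) {ε : ℝ}
    (hε : 0 < ε) : ∃ M, ∀ a b, uIcc a b ⊆ core s → ε ≤ dist a b →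
      ∀ k ≥ M, (tent s)^[k] '' uIcc a b = core s := by
  have hs : 2 < s^2 := Real.lt_sq_of_sqrt_lt hs1
  have hs1 : 1 ≤ s := Real.one_lt_sqrt_two.le.trans hs1.le
  obtain ⟨n, hn⟩ := pow_unbounded_of_one_lt (1/ε) (by linarith : 1 < s^2/2)
  refine ⟨2 * n + 1, fun a b hsub hab k hk => ?_⟩
  obtain ⟨m, hm, hcover⟩ := exists_iterate_image_superset_Icc_half hs1 hs2 n hsub <| by
    calc 1 = 1/ε * ε := by field_simp
      _ < (s^2/2)^n * ε := by gcongr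
      _ ≤ (s^2/2)^n * dist a b := by gcongr
  refine ((image_mono hsub).trans (image_iterate_tent_core hs1 hs2 k).subset).antisymm ?_
  obtain ⟨j, rfl⟩ : ∃ j, k = j + (m + 1) := ⟨k - (m + 1), by omega⟩
  rw [← image_iterate_tent_core hs1 hs2 j, Function.iterate_add, image_comp,
    Function.iterate_succ', image_comp, ← image_tent_Icc_half hs1]
  exact image_mono (image_mono hcover)

end Core

structure IsHofbauerTower (T : ℝ → ℝ) (c : ℝ) (D : ℕ → Set ℝ) : Prop where
  one : D 1 = uIcc c (T c)
  succ_of_mem : ∀ n, 1 ≤ n → c ∈ D n → D (n + 1) = uIcc (T^[n+1] c) (T c)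
  succ_of_not_mem : ∀ n, 1 ≤ n → c ∉ D n → D (n + 1) = T '' D n

section Branch

variable {s : ℝ} {D : ℕ → Set ℝ}

/-- The branch of `T^m` ending at `c` is cut at a preimage of `c` exactly when the tower is
cut, so its image follows the recursion defining `D`. -/
theorem exists_branch_image_eq (hs : 1 < s) (hD : IsHofbauerTower (tent s) (1/2) D)
    (hnc : ∀ n, 1 ≤ n → (tent s)^[n] (1/2) ≠ 1/2) {m : ℕ} (hm : 1 ≤ m) :
    ∃ l < 1/2, (∀ j < m, OnOneSide ((tent s)^[j] '' uIcc l (1/2))) ∧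
      (tent s)^[m] '' uIcc l (1/2) = D m := by
  have hs0 : 0 ≤ s := by linarith
  induction m, hm using Nat.le_induction with
  | base =>
    have hl : 1 / (2 * s) < 1/2 := by rw [div_lt_div_iff₀ (by positivity) two_pos]; linarith
    have hside : OnOneSide (uIcc (1 / (2 * s)) (1/2)) := by
      rw [uIcc_comm]; exact onOneSide_uIcc_half _
    refine ⟨1 / (2 * s), hl, fun j hj => ?_, ?_⟩
    · rwa [Nat.lt_one_iff.1 hj, Function.iterate_zero, image_id]
    · rw [Function.iterate_one, image_tent_uIcc hs0 hside, tent_of_le_half hs0 hl.le, hD.one]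
      field_simp
  | succ m hm ih =>
    obtain ⟨l, hl, hside, himg⟩ := ih
    have himg' := image_iterate_tent_uIcc hs0 hside
    by_cases hc : (1/2 : ℝ) ∈ D m
    · obtain ⟨y, hy, hTy⟩ := himg ▸ hc
      have hyl : uIcc y (1/2) ⊆ uIcc l (1/2) := uIcc_subset_uIcc hy right_mem_uIcc
      have hside' : ∀ j < m, OnOneSide ((tent s)^[j] '' uIcc y (1/2)) :=
        fun j hj => (hside j hj).mono (image_mono hyl)
      have himgy := image_iterate_tent_uIcc hs0 hside'
      rw [hTy] at himgy
      have hyc : y < 1/2 := by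
        refine lt_of_le_of_ne ?_ fun h => hnc m hm (h ▸ hTy)
        rw [uIcc_of_le hl.le] at hy
        exact hy.2
      refine ⟨y, hyc,
        Nat.forall_lt_succ_right.2 ⟨hside', himgy ▸ onOneSide_uIcc_half _⟩, ?_⟩
      rw [Function.iterate_succ', image_comp, himgy, image_tent_uIcc hs0 (onOneSide_uIcc_half _),
        hD.succ_of_mem m hm hc, uIcc_comm, Function.iterate_succ_apply']
    · have hDm : OnOneSide (D m) := by
        rw [← himg, himg']
        exact isPreconnected_uIcc.onOneSide (himg' ▸ himg ▸ hc)
      refine ⟨l, hl, Nat.forall_lt_succ_right.2 ⟨hside, himg ▸ hDm⟩, ?_⟩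
      rw [Function.iterate_succ', image_comp, himg, hD.succ_of_not_mem m hm hc]

theorem iterate_tent_ne_half_of_mem_Ioo (hs : 0 < s) {l x : ℝ} {g : ℕ}
    (hside : ∀ j < g + 1, OnOneSide ((tent s)^[j] '' uIcc l (1/2))) (hx : x ∈ Ioo l (1/2)) :
    (tent s)^[g] x ≠ 1/2 := by
  intro hgx
  have hl : l ∈ uIcc l (1/2) := left_mem_uIcc
  have hc : (1/2 : ℝ) ∈ uIcc l (1/2) := right_mem_uIcc
  have hxA : x ∈ uIcc l (1/2) := by
    rw [uIcc_of_le (hx.1.trans hx.2).le]; exact Ioo_subset_Icc_self hx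
  have hside' : ∀ j < g, OnOneSide ((tent s)^[j] '' uIcc l (1/2)) :=
    fun j hj => hside j (hj.trans g.lt_succ_self)
  have hlc := dist_iterate_tent hs.le hside' hl hc
  have hlx := dist_iterate_tent hs.le hside' hl hxA
  have hxc := dist_iterate_tent hs.le hside' hxA hc
  rw [hgx] at hlx hxc
  -- the distances from `T^g l` and `T^g c` to `c = T^g x` add up to their distance,
  -- so `c` lies strictly between them
  simp only [Real.dist_eq] at hlc hlx hxc
  rw [abs_of_neg (sub_neg.2 hx.1)] at hlx
  rw [abs_of_neg (sub_neg.2 hx.2)] at hxc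
  rw [abs_of_neg (sub_neg.2 (hx.1.trans hx.2))] at hlc
  have h1 := mul_pos (pow_pos hs g) (sub_pos.2 hx.1)
  have h2 := mul_pos (pow_pos hs g) (sub_pos.2 hx.2)
  have hl' := mem_image_of_mem (tent s)^[g] hl
  have hc' := mem_image_of_mem (tent s)^[g] hc
  rcases hside g g.lt_succ_self with h | h
  · rw [abs_of_nonpos (sub_nonpos.2 (h hl'))] at hlx
    rw [abs_of_nonneg (sub_nonneg.2 (h hc'))] at hxc
    rcases abs_cases ((tent s)^[g] l - (tent s)^[g] (1/2)) with ⟨h3, _⟩ | ⟨h3, _⟩ <;>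
      linarith
  · rw [abs_of_nonneg (sub_nonneg.2 (h hl'))] at hlx
    rw [abs_of_nonpos (sub_nonpos.2 (h hc'))] at hxc
    rcases abs_cases ((tent s)^[g] l - (tent s)^[g] (1/2)) with ⟨h3, _⟩ | ⟨h3, _⟩ <;>
      linarith

/-- The branch of `T^(g+1)` ending at `c` contains no preimage of `c` under `T^g`, and it is
stretched by `s^(g+1)` onto `D (g+1)`. -/
theorem div_pow_le_dist_half_of_iterate_eq_half (hs : 1 < s)
    (hD : IsHofbauerTower (tent s) (1/2) D) (hnc : ∀ n, 1 ≤ n → (tent s)^[n] (1/2) ≠ 1/2)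
    {δ : ℝ}
    (hlong : ∀ n, 1 ≤ n → δ ≤ Metric.diam (D n)) {g : ℕ} (hg : 1 ≤ g) {x : ℝ}
    (hgx : (tent s)^[g] x = 1/2) (hx : x ≠ 1/2) : δ / s^(g+1) ≤ dist x (1/2) := by
  wlog hxc : x < 1/2 generalizing x
  · have hx' : 1 - x < 1/2 := by linarith [lt_of_le_of_ne (not_lt.1 hxc) hx.symm]
    have := this (by rwa [iterate_tent_one_sub s x (by omega)]) hx'.ne hx'
    rw [Real.dist_eq] at this ⊢
    rwa [abs_sub_comm, show 1/2 - (1 - x) = x - 1/2 by ring] at this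
  have hs0 : 0 < s := by linarith
  obtain ⟨l, hl, hside, himg⟩ := exists_branch_image_eq hs hD hnc (by omega : 1 ≤ g + 1)
  have hxl : x ≤ l :=
    not_lt.1 fun hlx => iterate_tent_ne_half_of_mem_Ioo hs0 hside ⟨hlx, hxc⟩ hgx
  have hdiam : Metric.diam (D (g+1)) = s^(g+1) * dist l (1/2) := by
    rw [← himg, image_iterate_tent_uIcc hs0.le hside, Real.diam_uIcc,
      dist_iterate_tent hs0.le hside left_mem_uIcc right_mem_uIcc]
  have hlx : dist l (1/2) ≤ dist x (1/2) := by
    rw [Real.dist_eq, Real.dist_eq, abs_of_neg (by linarith), abs_of_neg (by linarith)]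
    linarith
  rw [div_le_iff₀' (pow_pos hs0 _)]
  calc δ ≤ Metric.diam (D (g+1)) := hlong _ (by omega)
    _ = s^(g+1) * dist l (1/2) := hdiam
    _ ≤ s^(g+1) * dist x (1/2) := by gcongr

end Branch

section Subcontinuum

open InvLim

variable {s : ℝ} {H : Set (InvLim (tent s) (core s))}

theorem isBounded_image_proj (i : ℕ) : Bornology.IsBounded (proj i '' H) :=
  (isBounded_core s).subset (image_subset_iff.2 fun z _ => proj_mem z i)

theorem IsConnected.onOneSide_image_proj (hconn : IsConnected H) {i : ℕ}
    (hc : (1/2 : ℝ) ∉ proj i '' H) : OnOneSide (proj i '' H) :=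
  (hconn.isPreconnected.image _ (continuous_proj i).continuousOn).onOneSide hc

theorem injOn_proj_of_forall_ge_half_not_mem (hs : 0 < s) (hconn : IsConnected H) {N : ℕ}
    (hN : ∀ i ≥ N, (1/2 : ℝ) ∉ proj i '' H) : InjOn (proj N) H :=
  injOn_proj fun i hi => (hconn.onOneSide_image_proj (hN i hi.le)).injOn_tent hs

theorem mul_diam_le_diam_image_proj_of_half_mem (hs : 0 < s) {i : ℕ}
    (hc : (1/2 : ℝ) ∈ proj (i + 1) '' H) :
    s / 2 * Metric.diam (proj (i + 1) '' H) ≤ Metric.diam (proj i '' H) := by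
  have himg := image_proj_eq_iterate_image H i 1
  rw [Function.iterate_one] at himg
  rw [himg]
  exact mul_diam_le_diam_image_tent hs hc (himg ▸ isBounded_image_proj _)

theorem pow_mul_diam_le_diam_image_proj (hs : 0 < s) (hconn : IsConnected H) {i g : ℕ}
    (hgap : ∀ t, 0 < t → t ≤ g → (1/2 : ℝ) ∉ proj (i + t) '' H) :
    s^g * Metric.diam (proj (i + g) '' H) ≤ Metric.diam (proj i '' H) := by
  have himg := image_proj_eq_iterate_image H i g
  rw [himg]
  refine mul_diam_le_diam_image (pow_pos hs g) (himg ▸ isBounded_image_proj _)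
    fun x hx y hy => (dist_iterate_tent hs.le (fun j hj => ?_) hx hy).ge
  have himg' := image_proj_eq_iterate_image H (i + (g - j)) j
  rw [show i + (g - j) + j = i + g by omega] at himg'
  exact himg' ▸ hconn.onOneSide_image_proj (hgap (g - j) (by omega) (by omega))

theorem div_pow_le_diam_image_proj (hs : 1 < s) {D : ℕ → Set ℝ}
    (hD : IsHofbauerTower (tent s) (1/2) D) (hnc : ∀ n, 1 ≤ n → (tent s)^[n] (1/2) ≠ 1/2)
    {δ : ℝ} (hlong : ∀ n, 1 ≤ n → δ ≤ Metric.diam (D n)) {i g : ℕ}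
    (hci : (1/2 : ℝ) ∈ proj i '' H) (hcj : (1/2 : ℝ) ∈ proj (i + g + 1) '' H) :
    δ / s^(g+2) ≤ Metric.diam (proj (i + g + 1) '' H) := by
  obtain ⟨x, hxP, hTx⟩ : ∃ x ∈ proj (i + g + 1) '' H, (tent s)^[g+1] x = 1/2 := by
    rwa [image_proj_eq_iterate_image H i (g + 1)] at hci
  exact (div_pow_le_dist_half_of_iterate_eq_half hs hD hnc hlong (by omega) hTx
    fun h => hnc (g+1) (by omega) (h ▸ hTx)).trans
    (Metric.dist_le_diam_of_mem (isBounded_image_proj _) hxP hcj)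

theorem exists_ge_div_le_diam_proj (hs : 1 < s) {D : ℕ → Set ℝ}
    (hD : IsHofbauerTower (tent s) (1/2) D) (hnc : ∀ n, 1 ≤ n → (tent s)^[n] (1/2) ≠ 1/2)
    {δ : ℝ} (hlong : ∀ n, 1 ≤ n → δ ≤ Metric.diam (D n)) (hconn : IsConnected H)
    (hfreq : ∀ N, ∃ i ≥ N, (1/2 : ℝ) ∈ proj i '' H) (N : ℕ) :
    ∃ i ≥ N, δ / (2 * s) ≤ Metric.diam (proj i '' H) := by
  classical
  have hs0 : 0 < s := by linarith
  obtain ⟨i, hiN, hci⟩ := hfreq N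
  have hnext : ∃ j, i < j ∧ (1/2 : ℝ) ∈ proj j '' H := by
    obtain ⟨j, hj, hcj⟩ := hfreq (i + 1)
    exact ⟨j, hj, hcj⟩
  obtain ⟨g, hg⟩ : ∃ g, Nat.find hnext = i + g + 1 :=
    ⟨Nat.find hnext - i - 1, by have := (Nat.find_spec hnext).1; omega⟩
  have hcj : (1/2 : ℝ) ∈ proj (i + g + 1) '' H := hg ▸ (Nat.find_spec hnext).2
  have hgap : ∀ t, 0 < t → t ≤ g → (1/2 : ℝ) ∉ proj (i + t) '' H :=
    fun t ht htg hct => Nat.find_min hnext (by omega) ⟨by omega, hct⟩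
  refine ⟨i, hiN, ?_⟩
  calc δ / (2 * s) = s^g * (s / 2) * (δ / s^(g+2)) := by field_simp; ring
    _ ≤ s^g * (s / 2 * Metric.diam (proj (i + g + 1) '' H)) := by
      rw [mul_assoc]; gcongr; exact div_pow_le_diam_image_proj hs hD hnc hlong hci hcj
    _ ≤ s^g * Metric.diam (proj (i + g) '' H) := by
      gcongr; exact mul_diam_le_diam_image_proj_of_half_mem hs0 hcj
    _ ≤ Metric.diam (proj i '' H) := pow_mul_diam_le_diam_image_proj hs0 hconn hgap

theorem eq_univ_of_exists_ge_le_diam_proj (hs1 : Real.sqrt 2 < s) (hs2 : s ≤ 2)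
    (hcomp : IsCompact H) (hconn : IsConnected H) {ε : ℝ} (hε : 0 < ε)
    (h : ∀ N, ∃ i ≥ N, ε ≤ Metric.diam (proj i '' H)) : H = univ := by
  obtain ⟨M, hM⟩ := exists_forall_iterate_image_eq_core hs1 hs2 hε
  have hP : ∀ n, proj n '' H = core s := by
    intro n
    obtain ⟨i, hi, hdiam⟩ := h (n + M)
    obtain ⟨a, b, hab⟩ :=
      (hconn.image _ (continuous_proj i).continuousOn).exists_eq_uIcc
        (hcomp.image (continuous_proj i))
    obtain ⟨k, rfl⟩ : ∃ k, i = n + k := ⟨i - n, by omega⟩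
    rw [image_proj_eq_iterate_image H n k, hab]
    exact hM a b (hab ▸ image_subset_iff.2 fun z _ => proj_mem z _)
      (by rwa [hab, Real.diam_uIcc] at hdiam) k (by omega)
  exact eq_univ_of_forall fun z =>
    mem_of_forall_proj_mem hcomp.isClosed fun n => (hP n).symm ▸ proj_mem z n

end Subcontinuum

theorem stmt8_general (s : ℝ) (hs : s ∈ Set.Ioc (Real.sqrt 2) 2) (T : ℝ → ℝ)
    (hT : ∀ x, T x = min (s * x) (s * (1 - x))) (c : ℝ) (hc : c = 1/2)
    (hnc : ∀ n, 1 ≤ n → T^[n] c ≠ c)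
    (D : ℕ → Set ℝ)
    (hD1 : D 1 = Set.uIcc c (T c))
    (hDcut : ∀ n, 1 ≤ n → c ∈ D n → D (n + 1) = Set.uIcc (T^[n+1] c) (T c))
    (hDnot : ∀ n, 1 ≤ n → c ∉ D n → D (n + 1) = T '' D n)
    (hlong : ∃ δ > (0:ℝ), ∀ n, 1 ≤ n → δ ≤ Metric.diam (D n))
    (K : Set ℝ) (hK : K = Set.Icc (T^[2] c) (T c))
    (H : Set (InvLim T K)) (hcomp : IsCompact H)
    (hconn : IsConnected H) (hproper : H ≠ Set.univ) :
    (∃ a, H = {a}) ∨ IsArc H := by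
  subst hc
  obtain rfl : T = tent s := funext hT
  obtain ⟨hs1, hs2⟩ := hs
  have hs : 1 < s := Real.one_lt_sqrt_two.trans hs1
  obtain rfl : K = core s := by
    rw [hK, Function.iterate_succ_apply, Function.iterate_one, tent_half, tent_half_slope hs.le,
      core]
  obtain ⟨δ, hδ, hlong⟩ := hlong
  by_cases hfin : ∃ N, ∀ i ≥ N, (1/2 : ℝ) ∉ InvLim.proj i '' H
  · obtain ⟨N, hN⟩ := hfin
    exact eq_singleton_or_isArc_of_injOn hcomp hconn (InvLim.continuous_proj N)
      (injOn_proj_of_forall_ge_half_not_mem (by linarith) hconn hN)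
  · push Not at hfin
    exact absurd (eq_univ_of_exists_ge_le_diam_proj hs1 hs2 hcomp hconn (by positivity)
      (exists_ge_div_le_diam_proj hs ⟨hD1, hDcut, hDnot⟩ hnc hlong hconn hfin)) hproper

/-- If the tent map `T` is long-branched (`inf_n |D n| > 0`), then every
proper subcontinuum of the core inverse limit `X′` is a point or an arc. -/
theorem stmt8 (s : ℝ) (hs : s ∈ Set.Ioc (Real.sqrt 2) 2) (T : ℝ → ℝ)
    (hT : ∀ x, T x = min (s * x) (s * (1 - x))) (c : ℝ) (hc : c = 1/2)
    (hnc : ∀ n, 1 ≤ n → T^[n] c ≠ c)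
    (hinf : Function.Injective fun n : ℕ => T^[n] c)
    (D : ℕ → Set ℝ)
    (hD1 : D 1 = Set.uIcc c (T c))
    (hDcut : ∀ n, 1 ≤ n → c ∈ D n → D (n + 1) = Set.uIcc (T^[n+1] c) (T c))
    (hDnot : ∀ n, 1 ≤ n → c ∉ D n → D (n + 1) = T '' D n)
    (hlong : ∃ δ > (0:ℝ), ∀ n, 1 ≤ n → δ ≤ Metric.diam (D n))
    (K : Set ℝ) (hK : K = Set.Icc (T^[2] c) (T c))
    (H : Set (InvLim T K)) (hne : H.Nonempty) (hcomp : IsCompact H)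
    (hconn : IsConnected H) (hproper : H ≠ Set.univ) :
    (∃ a, H = {a}) ∨ IsArc H :=
  stmt8_general s hs T hT c hc hnc D hD1 hDcut hDnot hlong K hK H hcomp hconn hproper
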